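/- arXiv:2111.06319 — 7 statements merged into one kernel-verified Lean document; each statement's English description precedes it below -/
import Mathlib

section
/- Let m ≥ 1, let W be the set of rotation-equivalence classes of admissible words of length 2m, and let U = (W →₀ ℚ) be the free ℚ-vector space on W, writing [t] for the basis vector of the rotation class of an admissible word t. Let R ⊆ U be the ℚ-submodule spanned by the elements 2[t] − [d₁(t)] − [d₂(t)], ranging over all admissible words t, and let M₁ ⊆ U be the submodule spanned by the classes [c_i] of the constant words, i ∈ ZMod 2m. Then the composite of the inclusion M₁ ↪ U with the quotient map U → U/R is a ℚ-linear isomorphism from M₁ onto U/R. -/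
/-!
Counting letters is invariant under rotation and sends `[d₁ t] + [d₂ t]` to twice the count
of `t`, so it kills `R`, while it sends `[c_i]` to `2m • eᵢ`; hence `M₁ ∩ R = 0`.

For `M₁ + R = U`, let `l` be a functional vanishing on `M₁` and `R`, so that
`2 l[t] = l[d₁ t] + l[d₂ t]`. Averaging over the rotations of a non-constant word `t` shows that
`d₁` of some rotation of `t` changes letter fewer times than `t` does. So among the maximisers of
`l` one with the fewest letter changes is constant, whence `l ≤ 0`; likewise `-l ≤ 0`.
-/

/-- A word of length `2*m`: a cyclic sequence of letter indices. -/
abbrev Word (m : ℕ) := ZMod (2*m) → ZMod (2*m)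

/-- Rotation of a word by `r`. -/
def rot (m : ℕ) (t : Word m) (r : ZMod (2*m)) : Word m := fun k => t (k + r)

/-- `ε` is a decoration of the word `t`. -/
def IsDecoration (m : ℕ) (t : Word m) (ε : ZMod (2*m) → ℤ) : Prop :=
  (∀ k, ε k = 1 ∨ ε k = -1) ∧
  (∀ k, ε k = 1 → ε (k+1) = 1 → t (k+1) = t k + 1) ∧
  (∀ k, ε k = -1 → ε (k+1) = -1 → t (k+1) = t k - 1) ∧
  (∀ k, ε k ≠ ε (k+1) → t (k+1) = t k)

/-- A word is admissible if it admits a decoration. -/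
def Admissible (m : ℕ) (t : Word m) : Prop := ∃ ε, IsDecoration m t ε

/-- First half-double: `d₁(t)(k) = t(k)` for `0 ≤ k ≤ m-1`, and
`d₁(t)(k) = t(2m-1-k)` for `m ≤ k ≤ 2m-1`. -/
def d1 (m : ℕ) (t : Word m) : Word m := fun k =>
  if k.val < m then t k else t ((2*m - 1 - k.val : ℕ) : ZMod (2*m))

/-- Second half-double: `d₂(t) = d₁(rotation of t by m)`. -/
def d2 (m : ℕ) (t : Word m) : Word m := d1 m (rot m t (m : ZMod (2*m)))

/-- Admissible words. -/
def AdmWord (m : ℕ) := {t : Word m // Admissible m t}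

/-- Rotation-equivalence classes of admissible words. -/
def WCl (m : ℕ) := Quot (fun t t' : AdmWord m => ∃ r, t'.1 = rot m t.1 r)

/-- The rotation class of an admissible word. -/
def cls (m : ℕ) (t : Word m) (h : Admissible m t) : WCl m := Quot.mk _ ⟨t, h⟩

/-- The submodule of relations `2[t] - [d₁(t)] - [d₂(t)]`. -/
noncomputable def RSub (m : ℕ) : Submodule ℚ (WCl m →₀ ℚ) :=
  Submodule.span ℚ {u | ∃ (t : Word m) (ht : Admissible m t)
    (h1 : Admissible m (d1 m t)) (h2 : Admissible m (d2 m t)),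
    u = (2:ℚ) • Finsupp.single (cls m t ht) 1
        - Finsupp.single (cls m (d1 m t) h1) 1
        - Finsupp.single (cls m (d2 m t) h2) 1}

/-- The submodule spanned by the classes of the constant words. -/
noncomputable def MOne (m : ℕ) : Submodule ℚ (WCl m →₀ ℚ) :=
  Submodule.span ℚ {u | ∃ (i : ZMod (2*m)) (h : Admissible m (fun _ => i)),
    u = Finsupp.single (cls m (fun _ => i) h) 1}

open Finset

theorem Finset.sum_range_two_mul {M : Type*} [AddCommMonoid M] (f : ℕ → M) (m : ℕ) :
    ∑ i ∈ range (2*m), f i = ∑ i ∈ range m, f i + ∑ i ∈ range m, f (m + i) := by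
  rw [two_mul, sum_range_add]

theorem ZMod.sum_eq_sum_range {n : ℕ} [NeZero n] {M : Type*} [AddCommMonoid M]
    (F : ZMod n → M) : ∑ k, F k = ∑ i ∈ range n, F i :=
  Finset.sum_nbij' ZMod.val (fun i => i) (by simp [ZMod.val_lt]) (by simp)
    (by simp) (by simpa using fun _ => Nat.mod_eq_of_lt) (by simp)

theorem ZMod.forall_iff_forall_lt {n : ℕ} [NeZero n] {P : ZMod n → Prop} :
    (∀ k, P k) ↔ ∀ i < n, P i :=
  ⟨fun h i _ => h i, fun h k => by simpa using h k.val k.val_lt⟩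

section Positions

variable {m : ℕ}

def foldIndex (m : ℕ) (k : ZMod (2*m)) : ZMod (2*m) :=
  if k.val < m then k else ((2*m - 1 - k.val : ℕ) : ZMod (2*m))

theorem d1_eq_comp_foldIndex (t : Word m) : d1 m t = t ∘ foldIndex m := by
  funext k
  simp only [d1, foldIndex, Function.comp_apply, apply_ite t]

theorem foldIndex_natCast_of_lt {i : ℕ} (h : i < m) : foldIndex m i = i := by
  rw [foldIndex, if_pos (by rw [ZMod.val_cast_of_lt (by omega)]; exact h)]

theorem foldIndex_natCast_add {i : ℕ} (h : i < m) :
    foldIndex m ((m + i : ℕ) : ZMod (2*m)) = ((m - 1 - i : ℕ) : ZMod (2*m)) := by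
  rw [foldIndex, ZMod.val_cast_of_lt (by omega), if_neg (by omega)]
  congr 1
  omega

end Positions

section Sums

variable {m : ℕ} [NeZero m] {M : Type*} [AddCommMonoid M]

theorem sum_comp_eq_sum_halves (t : Word m) (g : ZMod (2*m) → M) :
    ∑ k, g (t k) = ∑ i ∈ range m, g (t i) + ∑ i ∈ range m, g (t (i + m)) := by
  rw [ZMod.sum_eq_sum_range, sum_range_two_mul]
  simp only [Nat.cast_add, add_comm (m : ZMod (2*m))]

theorem sum_comp_d1 (t : Word m) (g : ZMod (2*m) → M) :
    ∑ k, g (d1 m t k) = 2 • ∑ i ∈ range m, g (t i) := by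
  rw [d1_eq_comp_foldIndex, ZMod.sum_eq_sum_range, sum_range_two_mul, two_smul]
  congr 1
  · exact sum_congr rfl fun i hi => by
      rw [Function.comp_apply, foldIndex_natCast_of_lt (mem_range.mp hi)]
  · rw [← sum_range_reflect]
    exact sum_congr rfl fun i hi => by
      have hi := mem_range.mp hi
      rw [Function.comp_apply, foldIndex_natCast_add (by omega),
        show m - 1 - (m - 1 - i) = i by omega]

theorem sum_comp_d2 (t : Word m) (g : ZMod (2*m) → M) :
    ∑ k, g (d2 m t k) = 2 • ∑ i ∈ range m, g (t (i + m)) :=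
  sum_comp_d1 _ g

theorem sum_comp_d1_add_sum_comp_d2 (t : Word m) (g : ZMod (2*m) → M) :
    ∑ k, g (d1 m t k) + ∑ k, g (d2 m t k) = 2 • ∑ k, g (t k) := by
  rw [sum_comp_d1, sum_comp_d2, sum_comp_eq_sum_halves, smul_add]

theorem sum_comp_rot (t : Word m) (r : ZMod (2*m)) (g : ZMod (2*m) → M) :
    ∑ k, g (rot m t r k) = ∑ k, g (t k) :=
  Equiv.sum_comp (Equiv.addRight r) (g ∘ t)

end Sums

section Decorations

def DecStep {A : Type*} [AddGroupWithOne A] (a : A) (e : ℤ) (b : A) (f : ℤ) : Prop :=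
  (e = 1 → f = 1 → b = a + 1) ∧ (e = -1 → f = -1 → b = a - 1) ∧ (e ≠ f → b = a)

variable {A : Type*} [AddGroupWithOne A]

theorem DecStep.reverse {a b : A} {e f : ℤ} (h : DecStep a e b f) : DecStep b (-f) a (-e) := by
  obtain ⟨hup, hdown, hturn⟩ := h
  refine ⟨fun hf he => ?_, fun hf he => ?_, fun hne => (hturn fun h => hne (by rw [h])).symm⟩
  · rw [hdown (by omega) (by omega), sub_add_cancel]
  · rw [hup (by omega) (by omega), add_sub_cancel_right]

theorem decStep_self_neg (a : A) (e : ℤ) : DecStep a e a (-e) :=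
  ⟨fun he hf => by omega, fun he hf => by omega, fun _ => rfl⟩

theorem decStep_self_of_ne (a : A) {e f : ℤ} (h : e ≠ f) : DecStep a e a f :=
  ⟨fun he hf => absurd (he.trans hf.symm) h, fun he hf => absurd (he.trans hf.symm) h,
    fun _ => rfl⟩

variable {m : ℕ}

theorem isDecoration_iff (t : Word m) (ε : ZMod (2*m) → ℤ) :
    IsDecoration m t ε ↔
      (∀ k, ε k = 1 ∨ ε k = -1) ∧ ∀ k, DecStep (t k) (ε k) (t (k+1)) (ε (k+1)) := by
  simp only [IsDecoration, DecStep, forall_and]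

theorem rot_admissible {t : Word m} (ht : Admissible m t) (r : ZMod (2*m)) :
    Admissible m (rot m t r) := by
  obtain ⟨ε, hε⟩ := ht
  obtain ⟨hsign, hstep⟩ := (isDecoration_iff t ε).mp hε
  refine ⟨fun k => ε (k + r), (isDecoration_iff _ _).mpr ⟨fun k => hsign _, fun k => ?_⟩⟩
  simpa only [rot, add_right_comm] using hstep (k + r)

theorem cls_rot {t : Word m} (ht : Admissible m t) (r : ZMod (2*m))
    (hrt : Admissible m (rot m t r)) : cls m (rot m t r) hrt = cls m t ht :=
  (Quot.sound ⟨r, rfl⟩).symm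

theorem const_admissible (i : ZMod (2*m)) : Admissible m (fun _ => i) := by
  let parity := ZMod.castHom (dvd_mul_right 2 m) (ZMod 2)
  refine ⟨fun k => if parity k = 0 then 1 else -1, (isDecoration_iff _ _).mpr
    ⟨fun k => by split <;> simp, fun k => decStep_self_of_ne i ?_⟩⟩
  rw [map_add, map_one]
  generalize parity k = x
  revert x
  decide

-- The mirrored half of `d1 m t` reads `t` backwards, and `DecStep.reverse` shows that a
-- backwards step is decorated by the negated signs.
def d1Sign (m : ℕ) (ε : ZMod (2*m) → ℤ) (k : ZMod (2*m)) : ℤ :=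
  if k.val < m then ε (foldIndex m k) else -ε (foldIndex m k)

theorem d1Sign_natCast_of_lt (ε : ZMod (2*m) → ℤ) {i : ℕ} (h : i < m) :
    d1Sign m ε i = ε i := by
  rw [d1Sign, ZMod.val_cast_of_lt (by omega), if_pos h, foldIndex_natCast_of_lt h]

theorem d1Sign_natCast_add (ε : ZMod (2*m) → ℤ) {i : ℕ} (h : i < m) :
    d1Sign m ε ((m + i : ℕ) : ZMod (2*m)) = -ε ((m - 1 - i : ℕ) : ZMod (2*m)) := by
  rw [d1Sign, ZMod.val_cast_of_lt (by omega), if_neg (by omega), foldIndex_natCast_add h]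

theorem d1_admissible [NeZero m] {t : Word m} (ht : Admissible m t) : Admissible m (d1 m t) := by
  obtain ⟨ε, hε⟩ := ht
  obtain ⟨hsign, hstep⟩ := (isDecoration_iff t ε).mp hε
  refine ⟨d1Sign m ε, (isDecoration_iff _ _).mpr ⟨fun k => ?_, ?_⟩⟩
  · unfold d1Sign
    split
    · exact hsign _
    · rcases hsign (foldIndex m k) with h | h <;> simp [h]
  rw [d1_eq_comp_foldIndex, ZMod.forall_iff_forall_lt]
  intro i hi2m
  simp only [Function.comp_apply, ← Nat.cast_add_one]
  rcases lt_or_ge i m with hi | hi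
  · rcases lt_or_ge (i + 1) m with hi' | hi'
    · rw [foldIndex_natCast_of_lt hi, foldIndex_natCast_of_lt hi', d1Sign_natCast_of_lt ε hi,
        d1Sign_natCast_of_lt ε hi', Nat.cast_add_one]
      exact hstep i
    · rw [show i + 1 = m + 0 by omega, foldIndex_natCast_of_lt hi,
        foldIndex_natCast_add (by omega), d1Sign_natCast_of_lt ε hi,
        d1Sign_natCast_add ε (by omega), show m - 1 - 0 = i by omega]
      exact decStep_self_neg _ _
  · obtain ⟨j, rfl⟩ := Nat.exists_eq_add_of_le hi
    rcases lt_or_ge (j + 1) m with hj | hj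
    · rw [show m + j + 1 = m + (j + 1) by omega, foldIndex_natCast_add (by omega),
        foldIndex_natCast_add hj, d1Sign_natCast_add ε (by omega), d1Sign_natCast_add ε hj,
        show m - 1 - j = m - 1 - (j + 1) + 1 by omega, Nat.cast_add_one]
      exact (hstep _).reverse
    · have hwrap : ((m + j + 1 : ℕ) : ZMod (2*m)) = ((0 : ℕ) : ZMod (2*m)) := by
        rw [show m + j + 1 = 2*m by omega, ZMod.natCast_self, Nat.cast_zero]
      rw [hwrap, foldIndex_natCast_add (by omega), foldIndex_natCast_of_lt (by omega),
        d1Sign_natCast_add ε (by omega), d1Sign_natCast_of_lt ε (by omega),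
        show m - 1 - j = 0 by omega]
      simpa using decStep_self_neg (t ((0 : ℕ) : ZMod (2*m))) (-ε ((0 : ℕ) : ZMod (2*m)))

theorem d2_admissible [NeZero m] {t : Word m} (ht : Admissible m t) : Admissible m (d2 m t) :=
  d1_admissible (rot_admissible ht _)

end Decorations

section LetterCount

variable {m : ℕ} [NeZero m]

def letterCount (t : Word m) : ZMod (2*m) → ℚ := ∑ k, Pi.single (t k) 1

theorem letterCount_rot (t : Word m) (r : ZMod (2*m)) :
    letterCount (rot m t r) = letterCount t :=
  sum_comp_rot t r fun j => Pi.single j 1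

theorem letterCount_d1_add_letterCount_d2 (t : Word m) :
    letterCount (d1 m t) + letterCount (d2 m t) = 2 • letterCount t :=
  sum_comp_d1_add_sum_comp_d2 t fun j => Pi.single j 1

theorem letterCount_const (i : ZMod (2*m)) :
    letterCount (fun _ : ZMod (2*m) => i) = (2*m : ℚ) • Pi.single i 1 := by
  rw [letterCount, Finset.sum_const, Finset.card_univ, ZMod.card, ← Nat.cast_smul_eq_nsmul ℚ]
  push_cast
  rfl

noncomputable def letterCountMap (m : ℕ) [NeZero m] : (WCl m →₀ ℚ) →ₗ[ℚ] ZMod (2*m) → ℚ :=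
  Finsupp.linearCombination ℚ
    (Quot.lift (fun a : AdmWord m => letterCount a.1) (by
      rintro a b ⟨r, hr⟩
      rw [hr, letterCount_rot]))

theorem letterCountMap_single_cls (t : Word m) (ht : Admissible m t) :
    letterCountMap m (Finsupp.single (cls m t ht) 1) = letterCount t :=
  (Finsupp.linearCombination_single ℚ 1 _).trans (one_smul ℚ _)

theorem RSub_le_ker_letterCountMap : RSub m ≤ LinearMap.ker (letterCountMap m) := by
  rw [RSub, Submodule.span_le]
  rintro _ ⟨t, ht, h1, h2, rfl⟩
  rw [SetLike.mem_coe, LinearMap.mem_ker, map_sub, map_sub, map_smul, letterCountMap_single_cls,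
    letterCountMap_single_cls, letterCountMap_single_cls, sub_sub,
    letterCount_d1_add_letterCount_d2, two_smul, two_smul, sub_self]

noncomputable def constComb (m : ℕ) [NeZero m] : (ZMod (2*m) → ℚ) →ₗ[ℚ] WCl m →₀ ℚ :=
  Fintype.linearCombination ℚ fun i => Finsupp.single (cls m _ (const_admissible i)) 1

theorem range_constComb : LinearMap.range (constComb m) = MOne m := by
  rw [constComb, Fintype.range_linearCombination, MOne]
  congr 1
  ext u
  exact ⟨fun ⟨i, hi⟩ => ⟨i, _, hi.symm⟩, fun ⟨i, _, hi⟩ => ⟨i, hi.symm⟩⟩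

theorem letterCountMap_constComb (c : ZMod (2*m) → ℚ) :
    letterCountMap m (constComb m c) = (2*m : ℚ) • c := by
  simp_rw [constComb, Fintype.linearCombination_apply, map_sum, map_smul,
    letterCountMap_single_cls, letterCount_const, smul_comm (c _) (2*m : ℚ), ← Finset.smul_sum]
  congr 1
  ext j
  simp [Finset.sum_apply, Pi.single_apply]

theorem disjoint_RSub_MOne : Disjoint (RSub m) (MOne m) := by
  rw [Submodule.disjoint_def]
  rintro x hR hM
  rw [← range_constComb] at hM
  obtain ⟨c, rfl⟩ := hM
  have hc : (2*m : ℚ) • c = 0 := by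
    rw [← letterCountMap_constComb]
    exact RSub_le_ker_letterCountMap hR
  have h2m : (2*m : ℚ) ≠ 0 := mul_ne_zero two_ne_zero (Nat.cast_ne_zero.mpr (NeZero.ne m))
  rw [smul_eq_zero_iff_right h2m] at hc
  rw [hc, map_zero]

end LetterCount

section StepCount

variable {m : ℕ} [NeZero m]

def stepCount (t : Word m) : ℕ := #{k | t (k + 1) ≠ t k}

theorem exists_eq_const_of_stepCount_eq_zero {t : Word m} (h : stepCount t = 0) :
    ∃ i, t = fun _ => i := by
  have hstep : ∀ k, t (k + 1) = t k := by
    simpa [stepCount, Finset.filter_eq_empty_iff] using h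
  refine ⟨t 0, funext fun k => ?_⟩
  rw [← ZMod.natCast_zmod_val k]
  induction k.val with
  | zero => rw [Nat.cast_zero]
  | succ n ih => rw [Nat.cast_succ, hstep, ih]

theorem stepCount_d1 (t : Word m) :
    stepCount (d1 m t) = 2 * #{i ∈ range (m - 1) | t ((i + 1 : ℕ) : ZMod (2*m)) ≠ t i} := by
  rw [stepCount, card_filter, ZMod.sum_eq_sum_range, sum_range_two_mul, card_filter,
    d1_eq_comp_foldIndex]
  simp only [Function.comp_apply, ← Nat.cast_add_one]
  have hm := NeZero.pos m
  have hturn : t (foldIndex m ↑(m - 1 + 1)) = t (foldIndex m ↑(m - 1)) := by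
    rw [show m - 1 + 1 = m + 0 by omega, foldIndex_natCast_add hm,
      foldIndex_natCast_of_lt (by omega), Nat.sub_zero]
  have hwrap : t (foldIndex m ↑(m + (m - 1) + 1)) = t (foldIndex m ↑(m + (m - 1))) := by
    rw [show m + (m - 1) + 1 = 2*m by omega, ZMod.natCast_self, ← Nat.cast_zero,
      foldIndex_natCast_of_lt hm, foldIndex_natCast_add (by omega), Nat.sub_self]
  rw [show range m = range (m - 1 + 1) by rw [Nat.sub_add_cancel hm], sum_range_succ,
    sum_range_succ, if_neg (not_not.mpr hturn), if_neg (not_not.mpr hwrap), add_zero, add_zero]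
  refine (congrArg₂ (· + ·) ?_ ?_).trans (two_mul _).symm
  · refine sum_congr rfl fun i hi => ?_
    have hi := mem_range.mp hi
    rw [foldIndex_natCast_of_lt (by omega), foldIndex_natCast_of_lt (by omega)]
  · rw [← sum_range_reflect]
    refine sum_congr rfl fun i hi => ?_
    have hi := mem_range.mp hi
    rw [show m + (m - 1 - 1 - i) + 1 = m + (m - 1 - 1 - i + 1) by omega,
      foldIndex_natCast_add (by omega), foldIndex_natCast_add (by omega),
      show m - 1 - (m - 1 - 1 - i + 1) = i by omega,
      show m - 1 - (m - 1 - 1 - i) = i + 1 by omega]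
    exact if_congr ne_comm rfl rfl

theorem sum_stepCount_d1_rot (t : Word m) :
    ∑ r, stepCount (d1 m (rot m t r)) = 2 * (m - 1) * stepCount t := by
  simp_rw [stepCount_d1, ← mul_sum, card_filter]
  rw [sum_comm, mul_assoc]
  have hrot : ∀ i : ℕ,
      ∑ r, (if rot m t r ((i + 1 : ℕ) : ZMod (2*m)) ≠ rot m t r i then 1 else 0) =
        stepCount t := by
    intro i
    rw [stepCount, card_filter]
    exact Fintype.sum_equiv (Equiv.addLeft (i : ZMod (2*m))) _ _ fun r => by
      simp only [rot, Equiv.coe_addLeft, Nat.cast_add_one, add_right_comm]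
      rfl
  rw [sum_congr rfl fun i _ => hrot i, sum_const, card_range, smul_eq_mul]

theorem exists_stepCount_d1_rot_lt {t : Word m} (h : stepCount t ≠ 0) :
    ∃ r, stepCount (d1 m (rot m t r)) < stepCount t := by
  have hsum : ∑ r, stepCount (d1 m (rot m t r)) < ∑ _r : ZMod (2*m), stepCount t := by
    rw [sum_stepCount_d1_rot, sum_const, card_univ, ZMod.card, smul_eq_mul]
    exact Nat.mul_lt_mul_of_pos_right (by have := NeZero.pos m; omega) (Nat.pos_of_ne_zero h)
  obtain ⟨r, -, hr⟩ := exists_lt_of_sum_lt hsum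
  exact ⟨r, hr⟩

end StepCount

theorem nonpos_of_midpoint_descent {α G : Type*} [Finite α] [AddCommGroup G] [LinearOrder G]
    [IsOrderedAddMonoid G] (f : α → G) (μ : α → ℕ) (hzero : ∀ a, μ a = 0 → f a = 0)
    (hdesc : ∀ a, μ a ≠ 0 → ∃ b c, μ b < μ a ∧ f a + f a = f b + f c) (a : α) : f a ≤ 0 := by
  have : Nonempty α := ⟨a⟩
  obtain ⟨x, hx⟩ := Finite.exists_max f
  suffices h : ∀ n, ∀ x, μ x = n → (∀ y, f y ≤ f x) → f x ≤ 0 from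
    (hx a).trans (h _ x rfl hx)
  intro n
  induction n using Nat.strong_induction_on with
  | _ n ih =>
    rintro x rfl hmax
    by_cases h0 : μ x = 0
    · exact (hzero x h0).le
    obtain ⟨b, c, hb, hsum⟩ := hdesc x h0
    have hfb : f x ≤ f b :=
      le_of_add_le_add_right (a := f x) (hsum.trans_le (add_le_add le_rfl (hmax c)))
    exact hfb.trans (ih _ hb b rfl fun y => (hmax y).trans hfb)

section Spanning

variable {m : ℕ} [NeZero m]

theorem apply_single_cls_nonpos (l : (WCl m →₀ ℚ) →ₗ[ℚ] ℚ) (hM : MOne m ≤ LinearMap.ker l)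
    (hR : RSub m ≤ LinearMap.ker l) (t : Word m) (ht : Admissible m t) :
    l (Finsupp.single (cls m t ht) 1) ≤ 0 := by
  refine nonpos_of_midpoint_descent
    (fun a : {u : Word m // Admissible m u} => l (Finsupp.single (cls m a.1 a.2) 1))
    (fun a => stepCount a.1) (fun ⟨u, hu⟩ h => ?_) (fun ⟨u, hu⟩ h => ?_) ⟨t, ht⟩
  · obtain ⟨i, rfl⟩ := exists_eq_const_of_stepCount_eq_zero h
    exact hM (Submodule.subset_span ⟨i, hu, rfl⟩)
  · obtain ⟨r, hr⟩ := exists_stepCount_d1_rot_lt h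
    have hv := rot_admissible hu r
    refine ⟨⟨_, d1_admissible hv⟩, ⟨_, d2_admissible hv⟩, hr, ?_⟩
    have hrel := hR (Submodule.subset_span ⟨_, hv, d1_admissible hv, d2_admissible hv, rfl⟩)
    rw [LinearMap.mem_ker, map_sub, map_sub, map_smul, cls_rot hu, smul_eq_mul] at hrel
    dsimp only
    linarith

theorem single_cls_mem_sup (t : Word m) (ht : Admissible m t) :
    Finsupp.single (cls m t ht) 1 ∈ RSub m ⊔ MOne m := by
  by_contra hnot
  obtain ⟨l, hl, hle⟩ := Submodule.exists_le_ker_of_notMem hnot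
  have hle' : RSub m ⊔ MOne m ≤ LinearMap.ker (-l) := by rwa [LinearMap.ker_neg]
  have h₁ := apply_single_cls_nonpos l (le_sup_right.trans hle) (le_sup_left.trans hle) t ht
  have h₂ := apply_single_cls_nonpos (-l) (le_sup_right.trans hle') (le_sup_left.trans hle') t ht
  rw [LinearMap.neg_apply, neg_nonpos] at h₂
  exact hl (le_antisymm h₁ h₂)

theorem codisjoint_RSub_MOne : Codisjoint (RSub m) (MOne m) := by
  rw [codisjoint_iff, Submodule.eq_top_iff']
  intro x
  induction x using Finsupp.induction_linear with
  | zero => exact zero_mem _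
  | add x y hx hy => exact add_mem hx hy
  | single w c =>
    obtain ⟨⟨t, ht⟩, rfl⟩ := Quot.exists_rep w
    change Finsupp.single (cls m t ht) c ∈ _
    rw [← Finsupp.smul_single_one]
    exact Submodule.smul_mem _ c (single_cls_mem_sup t ht)

end Spanning

/-- The composite of the inclusion `M₁ ↪ U` with the quotient map `U → U/R`
is a ℚ-linear isomorphism from `M₁` onto `U/R`. -/
theorem mone_iso_quotient (m : ℕ) (hm : 1 ≤ m) :
    Function.Bijective ((RSub m).mkQ.comp (MOne m).subtype) := by
  have : NeZero m := ⟨by omega⟩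
  exact (Submodule.quotientEquivOfIsCompl (RSub m) (MOne m)
    ⟨disjoint_RSub_MOne, codisjoint_RSub_MOne⟩).symm.bijective
end

section
/- Let m ≥ 2 (so that the word length 2m is at least 4). Suppose (t, ε) and (t′, ε′) are decorated words of length 2m (i.e., ε is a decoration of t and ε′ of t′) and t′ is a rotation of t. Then there exists r ∈ ZMod 2m such that simultaneously t′ = t ∘ (fun k => k + r) and ε′ = ε ∘ (fun k => k + r). In other words, for 2m ≥ 4 the map from cyclic decorated words to cyclic words that forgets the decoration is injective. -/
section aux
variable (m : ℕ)

lemma zz_one_ne (hm : 2 ≤ m) : (1 : ZMod (2*m)) ≠ 0 := by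
  haveI : NeZero (2*m) := ⟨by omega⟩
  have : ((1:ℕ) : ZMod (2*m)) ≠ 0 := by
    rw [Ne, ZMod.natCast_eq_zero_iff]
    intro h; have := Nat.le_of_dvd one_pos h; omega
  simpa using this

lemma zz_two_ne (hm : 2 ≤ m) : (2 : ZMod (2*m)) ≠ 0 := by
  haveI : NeZero (2*m) := ⟨by omega⟩
  have : ((2:ℕ) : ZMod (2*m)) ≠ 0 := by
    rw [Ne, ZMod.natCast_eq_zero_iff]
    intro h; have := Nat.le_of_dvd two_pos h; omega
  simpa using this

/-- trichotomy for a decoration at position k. -/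
lemma tri {t : Word m} {ε : ZMod (2*m) → ℤ} (hε : IsDecoration m t ε) (k : ZMod (2*m)) :
    (ε k = 1 ∧ ε (k+1) = 1 ∧ t (k+1) = t k + 1) ∨
    (ε k = -1 ∧ ε (k+1) = -1 ∧ t (k+1) = t k - 1) ∨
    (ε (k+1) = -ε k ∧ t (k+1) = t k) := by
  obtain ⟨hv, h1, h2, h3⟩ := hε
  rcases hv k with hk | hk <;> rcases hv (k+1) with hk1 | hk1
  · exact Or.inl ⟨hk, hk1, h1 k hk hk1⟩
  · exact Or.inr (Or.inr ⟨by omega, h3 k (by omega)⟩)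
  · exact Or.inr (Or.inr ⟨by omega, h3 k (by omega)⟩)
  · exact Or.inr (Or.inl ⟨hk, hk1, h2 k hk hk1⟩)

lemma decoration_unique (hm : 2 ≤ m) {t : Word m} {ε η : ZMod (2*m) → ℤ}
    (hε : IsDecoration m t ε) (hη : IsDecoration m t η) :
    (∀ k, ε k = η k) ∨ ((∀ k, ε k = -η k) ∧ ∀ k, t (k+1) = t k) := by
  haveI : NeZero (2*m) := ⟨by omega⟩
  have h1 := zz_one_ne m hm
  have h2 := zz_two_ne m hm
  -- step lemmas
  have stepEq : ∀ k, ε k = η k → ε (k+1) = η (k+1) := by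
    intro k hk
    rcases tri m hε k with ⟨a1,a2,a3⟩|⟨a1,a2,a3⟩|⟨a1,a3⟩ <;>
      rcases tri m hη k with ⟨b1,b2,b3⟩|⟨b1,b2,b3⟩|⟨b1,b3⟩ <;>
      first
        | omega
        | (exact absurd (by first | linear_combination a3 - b3 | linear_combination b3 - a3) h2)
        | (exact absurd (by first | linear_combination a3 - b3 | linear_combination b3 - a3) h2)
        | (exact absurd (by first | linear_combination a3 - b3 | linear_combination b3 - a3) h1)
        | (exact absurd (by first | linear_combination a3 - b3 | linear_combination b3 - a3) h1)
  have stepNeg : ∀ k, ε k = -η k → ε (k+1) = -η (k+1) := by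
    intro k hk
    rcases tri m hε k with ⟨a1,a2,a3⟩|⟨a1,a2,a3⟩|⟨a1,a3⟩ <;>
      rcases tri m hη k with ⟨b1,b2,b3⟩|⟨b1,b2,b3⟩|⟨b1,b3⟩ <;>
      first
        | omega
        | (exact absurd (by first | linear_combination a3 - b3 | linear_combination b3 - a3) h2)
        | (exact absurd (by first | linear_combination a3 - b3 | linear_combination b3 - a3) h2)
        | (exact absurd (by first | linear_combination a3 - b3 | linear_combination b3 - a3) h1)
        | (exact absurd (by first | linear_combination a3 - b3 | linear_combination b3 - a3) h1)
  have key : ∀ (P : ZMod (2*m) → Prop), P 0 → (∀ k, P k → P (k+1)) → ∀ k, P k := by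
    intro P h0 hstep k
    have : ∀ n : ℕ, P (n : ZMod (2*m)) := by
      intro n; induction n with
      | zero => simpa using h0
      | succ n ih => push_cast; exact hstep _ ih
    have := this k.val
    rwa [ZMod.natCast_val, ZMod.cast_id] at this
  have h0 : ε 0 = η 0 ∨ ε 0 = -η 0 := by
    rcases hε.1 0 with h|h <;> rcases hη.1 0 with h'|h' <;> omega
  rcases h0 with h0 | h0
  · exact Or.inl (key _ h0 stepEq)
  · refine Or.inr ⟨key _ h0 stepNeg, ?_⟩
    have hall := key _ h0 stepNeg
    intro k
    rcases tri m hε k with ⟨a1,a2,a3⟩|⟨a1,a2,a3⟩|⟨a1,a3⟩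
    · rcases tri m hη k with ⟨b1,b2,b3⟩|⟨b1,b2,b3⟩|⟨b1,b3⟩
      · have := hall k; omega
      · exact absurd (by first | linear_combination a3 - b3 | linear_combination b3 - a3) h2
      · exact absurd (by first | linear_combination a3 - b3 | linear_combination b3 - a3) h1
    · rcases tri m hη k with ⟨b1,b2,b3⟩|⟨b1,b2,b3⟩|⟨b1,b3⟩
      · exact absurd (by first | linear_combination a3 - b3 | linear_combination b3 - a3) h2
      · have := hall k; omega
      · exact absurd (by first | linear_combination a3 - b3 | linear_combination b3 - a3) h1
    · exact a3

end aux

lemma rot_decoration (m : ℕ) {t : Word m} {ε : ZMod (2*m) → ℤ}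
    (hε : IsDecoration m t ε) (r : ZMod (2*m)) :
    IsDecoration m (rot m t r) (fun k => ε (k + r)) := by
  obtain ⟨hv, h1, h2, h3⟩ := hε
  refine ⟨fun k => hv (k + r), fun k a b => ?_, fun k a b => ?_, fun k a => ?_⟩
  · simpa [rot, add_right_comm] using h1 (k + r) a (by simpa [add_right_comm] using b)
  · simpa [rot, add_right_comm] using h2 (k + r) a (by simpa [add_right_comm] using b)
  · simpa [rot, add_right_comm] using h3 (k + r) (by simpa [add_right_comm] using a)


/-- For word length `2m ≥ 4`, if two decorated words have rotation-equivalent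
underlying words, then some single rotation simultaneously matches the words
and the decorations: the forgetful map from cyclic decorated words to cyclic
words is injective. -/
theorem decorated_forgetful_injective (m : ℕ) (hm : 2 ≤ m)
    (t t' : Word m) (ε ε' : ZMod (2*m) → ℤ)
    (hε : IsDecoration m t ε) (hε' : IsDecoration m t' ε')
    (h : ∃ r, t' = rot m t r) :
    ∃ r : ZMod (2*m), t' = rot m t r ∧ ε' = fun k => ε (k + r) := by
  obtain ⟨r, hr⟩ := h
  have hη : IsDecoration m t' (fun k => ε (k + r)) := hr ▸ rot_decoration m hε r
  rcases decoration_unique m hm hε' hη with hcase | ⟨hneg, hconst⟩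
  · exact ⟨r, hr, funext hcase⟩
  · -- t' is constant-step-0, so t (j+1) = t j for all j, and ε alternates.
    have htstep : ∀ j : ZMod (2*m), t (j + 1) = t j := by
      intro j
      have := hconst (j - r)
      simp only [hr, rot] at this
      convert this using 2 <;> ring
    have halt : ∀ j : ZMod (2*m), ε (j + 1) = -ε j := by
      intro j
      have h1 := zz_one_ne m hm
      rcases tri m hε j with ⟨a1,a2,a3⟩|⟨a1,a2,a3⟩|⟨a1,a3⟩
      · exact absurd (by linear_combination htstep j - a3) h1
      · exact absurd (by linear_combination a3 - htstep j) h1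
      · exact a1
    refine ⟨r + 1, ?_, ?_⟩
    · funext k
      simp only [hr, rot]
      have := htstep (k + r)
      rw [← this]; ring_nf
    · funext k
      have := halt (k + r)
      have h2 := hneg k
      have e : k + (r + 1) = (k + r) + 1 := by ring
      rw [e, this]; omega
end

section
/- Let P be a topological space, let A, B, C, D ⊆ P be subsets, and let m, m′ ≥ 1 be integers. Then there is a homeomorphism from D^{2m′}( D^{2m}(P; A, B); D^{2m}(C), D^{2m}(D) ) to D^{2m}( D^{2m′}(P; C, D); D^{2m′}(A), D^{2m′}(B) ) which sends, for every j ∈ ZMod 2m′, k ∈ ZMod 2m and x ∈ P, the class of (j, (k, x)) to the class of (k, (j, x)). In particular, replicating first over the pair (A, B) and then over (the images of) (C, D) yields the same space, up to a homeomorphism respecting all distinguished subsets, as replicating in the opposite order. -/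
/-- The gluing relation defining the `2n`-replicant of a piece `(P, (A, B))`:
`(2i, x) ~ (2i+1, x)` for `x ∈ A` and `(2i-1, x) ~ (2i, x)` for `x ∈ B`. -/
def replRel (n : ℕ) {P : Type*} (A B : Set P) :
    ZMod (2*n) × P → ZMod (2*n) × P → Prop := fun p q =>
  (∃ (i : ZMod (2*n)) (x : P), x ∈ A ∧ p = (2*i, x) ∧ q = (2*i+1, x)) ∨
  (∃ (i : ZMod (2*n)) (x : P), x ∈ B ∧ p = (2*i-1, x) ∧ q = (2*i, x))

/-- The `2n`-replicant of the piece `(P, (A, B))`: the quotient of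
`ZMod (2n) × P` by the equivalence relation generated by `replRel`. -/
abbrev Repl (n : ℕ) (P : Type*) [TopologicalSpace P] (A B : Set P) :=
  Quot (replRel n A B)

/-- The image in the `2n`-replicant of the `2n` copies of a subset `C ⊆ P`. -/
def dImg (n : ℕ) {P : Type*} [TopologicalSpace P] (A B : Set P) (C : Set P) :
    Set (Repl n P A B) :=
  Quot.mk (replRel n A B) '' {p : ZMod (2*n) × P | p.2 ∈ C}

/-- A map out of a product with discrete first factor is continuous provided
every section is continuous. -/
lemma continuous_of_discrete_prod {X Y Z : Type*} [TopologicalSpace X] [DiscreteTopology X]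
    [TopologicalSpace Y] [TopologicalSpace Z] {f : X × Y → Z}
    (h : ∀ x, Continuous fun y => f (x, y)) : Continuous f := by
  rw [continuous_def]
  intro U hU
  have hset : f ⁻¹' U = ⋃ x : X, {x} ×ˢ ((fun y => f (x, y)) ⁻¹' U) := by
    ext ⟨a, b⟩
    simp
  rw [hset]
  exact isOpen_iUnion fun x => (isOpen_discrete _).prod ((h x).isOpen_preimage U hU)

/-- The section of the swap map at a fixed `j` in the outer copy-index. -/
def gSwap (n n' : ℕ) {P : Type*} [TopologicalSpace P] (A B C D : Set P)
    (j : ZMod (2*n')) :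
    ZMod (2*n) × P → Repl n (Repl n' P C D) (dImg n' C D A) (dImg n' C D B) :=
  fun p => Quot.mk _ (p.1, Quot.mk _ (j, p.2))

lemma gSwap_resp (n n' : ℕ) {P : Type*} [TopologicalSpace P] (A B C D : Set P)
    (j : ZMod (2*n')) : ∀ p q, replRel n A B p q →
      gSwap n n' A B C D j p = gSwap n n' A B C D j q := by
  rintro p q (⟨i, x, hx, rfl, rfl⟩ | ⟨i, x, hx, rfl, rfl⟩)
  · exact Quot.sound (Or.inl ⟨i, Quot.mk _ (j, x), ⟨(j, x), hx, rfl⟩, rfl, rfl⟩)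
  · exact Quot.sound (Or.inr ⟨i, Quot.mk _ (j, x), ⟨(j, x), hx, rfl⟩, rfl, rfl⟩)

lemma gSwap_cont (n n' : ℕ) {P : Type*} [TopologicalSpace P] (A B C D : Set P)
    (j : ZMod (2*n')) : Continuous (gSwap n n' A B C D j) :=
  continuous_quot_mk.comp
    (continuous_fst.prodMk (continuous_quot_mk.comp (continuous_const.prodMk continuous_snd)))

/-- The swap map before taking the outer quotient. -/
def FSwap (n n' : ℕ) {P : Type*} [TopologicalSpace P] (A B C D : Set P) :
    ZMod (2*n') × Repl n P A B →
      Repl n (Repl n' P C D) (dImg n' C D A) (dImg n' C D B) :=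
  fun p => Quot.lift (gSwap n n' A B C D p.1) (gSwap_resp n n' A B C D p.1) p.2

lemma FSwap_resp (n n' : ℕ) {P : Type*} [TopologicalSpace P] (A B C D : Set P) :
    ∀ p q, replRel n' (dImg n A B C) (dImg n A B D) p q →
      FSwap n n' A B C D p = FSwap n n' A B C D q := by
  rintro p q (⟨i, y, hy, rfl, rfl⟩ | ⟨i, y, hy, rfl, rfl⟩)
  · obtain ⟨⟨k, x⟩, hx, rfl⟩ := hy
    exact congrArg (Quot.mk _) (congrArg (Prod.mk k) (Quot.sound (Or.inl ⟨i, x, hx, rfl, rfl⟩)))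
  · obtain ⟨⟨k, x⟩, hx, rfl⟩ := hy
    exact congrArg (Quot.mk _) (congrArg (Prod.mk k) (Quot.sound (Or.inr ⟨i, x, hx, rfl, rfl⟩)))

lemma FSwap_cont (n n' : ℕ) {P : Type*} [TopologicalSpace P] (A B C D : Set P) :
    Continuous (FSwap n n' A B C D) :=
  continuous_of_discrete_prod fun j =>
    continuous_quot_lift (gSwap_resp n n' A B C D j) (gSwap_cont n n' A B C D j)

/-- The swap map between the two iterated replicants. -/
def replSwap (n n' : ℕ) {P : Type*} [TopologicalSpace P] (A B C D : Set P) :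
    Repl n' (Repl n P A B) (dImg n A B C) (dImg n A B D) →
      Repl n (Repl n' P C D) (dImg n' C D A) (dImg n' C D B) :=
  Quot.lift (FSwap n n' A B C D) (FSwap_resp n n' A B C D)

lemma replSwap_cont (n n' : ℕ) {P : Type*} [TopologicalSpace P] (A B C D : Set P) :
    Continuous (replSwap n n' A B C D) :=
  continuous_quot_lift _ (FSwap_cont n n' A B C D)

lemma replSwap_replSwap (n n' : ℕ) {P : Type*} [TopologicalSpace P] (A B C D : Set P)
    (z : Repl n' (Repl n P A B) (dImg n A B C) (dImg n A B D)) :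
    replSwap n' n C D A B (replSwap n n' A B C D z) = z := by
  induction z using Quot.ind with
  | _ p =>
    obtain ⟨j, y⟩ := p
    induction y using Quot.ind with
    | _ q => rfl

/-- Replication over the pair `(A, B)` and then over (the images of) `(C, D)`
yields the same space, up to a homeomorphism respecting the copies, as
replicating in the opposite order. -/
theorem repl_comm (P : Type*) [TopologicalSpace P] (A B C D : Set P)
    (m m' : ℕ) (hm : 1 ≤ m) (hm' : 1 ≤ m') :
    ∃ φ : Repl m' (Repl m P A B) (dImg m A B C) (dImg m A B D) ≃ₜ
          Repl m (Repl m' P C D) (dImg m' C D A) (dImg m' C D B),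
      ∀ (j : ZMod (2*m')) (k : ZMod (2*m)) (x : P),
        φ (Quot.mk (replRel m' (dImg m A B C) (dImg m A B D))
            (j, Quot.mk (replRel m A B) (k, x))) =
          Quot.mk (replRel m (dImg m' C D A) (dImg m' C D B))
            (k, Quot.mk (replRel m' C D) (j, x)) := by
  refine ⟨⟨⟨replSwap m m' A B C D, replSwap m' m C D A B,
    replSwap_replSwap m m' A B C D, replSwap_replSwap m' m C D A B⟩,
    replSwap_cont m m' A B C D, replSwap_cont m' m C D A B⟩, fun j k x => rfl⟩
end

section
/- Let P be a topological space, A, B ⊆ P subsets, and m ≥ 1 an integer. The map (k, x) ↦ (k + 2, x) on (ZMod 2m) × P descends to a homeomorphism ρ of D^{2m}(P; A, B) with ρ^m = id, and the quotient space of D^{2m}(P; A, B) by the equivalence relation identifying each point with its images under the iterates of ρ is homeomorphic to D^{2}(P; A, B), via the map induced by the reduction homomorphism ZMod 2m → ZMod 2 on indices. -/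
section Aux

set_option linter.unusedSectionVars false

variable {P : Type*} [TopologicalSpace P] {A B : Set P} {m : ℕ}

private lemma mk_congr {n : ℕ} {k k' : ZMod (2*n)} (x : P) (h : k = k') :
    Quot.mk (replRel n A B) (k, x) = Quot.mk (replRel n A B) (k', x) := by rw [h]

private lemma shift_resp (c : ZMod (2*m)) :
    ∀ p q : ZMod (2*m) × P, replRel m A B p q →
      replRel m A B (p.1 + 2*c, p.2) (q.1 + 2*c, q.2) := by
  rintro p q (⟨i, x, hx, rfl, rfl⟩ | ⟨i, x, hx, rfl, rfl⟩)
  · exact Or.inl ⟨i + c, x, hx, by simp [Prod.ext_iff]; ring, by simp [Prod.ext_iff]; ring⟩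
  · exact Or.inr ⟨i + c, x, hx, by simp [Prod.ext_iff]; ring, by simp [Prod.ext_iff]; ring⟩

/-- Shift by `2*c` on the replicant. -/
private def shift2 (c : ZMod (2*m)) : Repl m P A B → Repl m P A B :=
  Quot.map (fun p => (p.1 + 2*c, p.2)) (shift_resp c)

private lemma shift2_mk (c k : ZMod (2*m)) (x : P) :
    shift2 c (Quot.mk (replRel m A B) (k, x)) = Quot.mk (replRel m A B) (k + 2*c, x) := rfl

private lemma continuous_shift2 (c : ZMod (2*m)) :
    Continuous (shift2 (A := A) (B := B) c) := by
  apply continuous_quot_lift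
  exact continuous_quot_mk.comp
    ((continuous_fst.add continuous_const).prodMk continuous_snd)

/-- The rotation homeomorphism. -/
private def rho : Repl m P A B ≃ₜ Repl m P A B where
  toFun := shift2 1
  invFun := shift2 (-1)
  left_inv := by
    intro z
    induction z using Quot.ind with | mk p => ?_
    obtain ⟨k, x⟩ := p
    rw [shift2_mk, shift2_mk]
    exact mk_congr x (by ring)
  right_inv := by
    intro z
    induction z using Quot.ind with | mk p => ?_
    obtain ⟨k, x⟩ := p
    rw [shift2_mk, shift2_mk]
    exact mk_congr x (by ring)
  continuous_toFun := continuous_shift2 1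
  continuous_invFun := continuous_shift2 (-1)

private lemma coe_rho : ⇑(rho (P := P) (A := A) (B := B) (m := m)) = shift2 1 := rfl

private lemma rho_mk (k : ZMod (2*m)) (x : P) :
    rho (Quot.mk (replRel m A B) (k, x)) = Quot.mk (replRel m A B) (k + 2, x) := by
  rw [coe_rho, shift2_mk]
  exact mk_congr x (by ring)

private lemma rho_iter (j : ℕ) (k : ZMod (2*m)) (x : P) :
    (⇑(rho (A := A) (B := B)))^[j] (Quot.mk (replRel m A B) (k, x)) =
      Quot.mk (replRel m A B) (k + 2*(j : ZMod (2*m)), x) := by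
  induction j with
  | zero => simp
  | succ j ih =>
    rw [Function.iterate_succ_apply', ih, rho_mk]
    exact mk_congr x (by push_cast; ring)

/-- Reduction mod 2 on indices. -/
private def c2 (m : ℕ) : ZMod (2*m) →+* ZMod (2*1) :=
  ZMod.castHom (⟨m, by ring⟩ : (2*1) ∣ (2*m)) (ZMod (2*1))

private lemma c2_two : c2 m (2 : ZMod (2*m)) = 2 := map_ofNat (c2 m) 2

private lemma h20 : (2 : ZMod (2*1)) = 0 := by decide

private lemma resp1 : ∀ p q : ZMod (2*m) × P, replRel m A B p q →
    Quot.mk (replRel 1 A B) (c2 m p.1, p.2) = Quot.mk (replRel 1 A B) (c2 m q.1, q.2) := by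
  rintro p q (⟨i, x, hx, rfl, rfl⟩ | ⟨i, x, hx, rfl, rfl⟩)
  · exact Quot.sound (Or.inl ⟨c2 m i, x, hx,
      by rw [map_mul, c2_two],
      by rw [map_add, map_mul, c2_two, map_one]⟩)
  · exact Quot.sound (Or.inr ⟨c2 m i, x, hx,
      by rw [map_sub, map_mul, c2_two, map_one],
      by rw [map_mul, c2_two]⟩)

/-- The induced map from the `2m`-replicant to the double. -/
private def toD : Repl m P A B → Repl 1 P A B :=
  Quot.lift (fun p => Quot.mk (replRel 1 A B) (c2 m p.1, p.2)) resp1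

private lemma toD_mk (k : ZMod (2*m)) (x : P) :
    toD (Quot.mk (replRel m A B) (k, x)) = Quot.mk (replRel 1 A B) (c2 m k, x) := rfl

/-- The orbit relation of `rho`. -/
private def orbRel : Repl m P A B → Repl m P A B → Prop :=
  fun p q => ∃ j : ℕ, q = (⇑(rho (A := A) (B := B)))^[j] p

private lemma orbit_mk (k : ZMod (2*m)) (x : P) (j : ℕ) :
    Quot.mk (orbRel (A := A) (B := B))
        (Quot.mk (replRel m A B) (k + 2*(j : ZMod (2*m)), x)) =
      Quot.mk orbRel (Quot.mk (replRel m A B) (k, x)) :=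
  (Quot.sound ⟨j, by rw [rho_iter]⟩).symm

private lemma resp2 : ∀ p q : Repl m P A B, orbRel p q → toD p = toD q := by
  rintro p q ⟨j, rfl⟩
  induction p using Quot.ind with | mk p => ?_
  obtain ⟨k, x⟩ := p
  rw [rho_iter, toD_mk, toD_mk]
  refine mk_congr x ?_
  rw [map_add, map_mul, c2_two, h20]
  ring

/-- Forward map of the quotient homeomorphism. -/
private def Ft : Quot (orbRel (P := P) (A := A) (B := B) (m := m)) → Repl 1 P A B :=
  Quot.lift toD resp2

private lemma resp3 : ∀ p q : ZMod (2*1) × P, replRel 1 A B p q →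
    Quot.mk (orbRel (A := A) (B := B) (m := m))
        (Quot.mk (replRel m A B) (((p.1.val : ℕ) : ZMod (2*m)), p.2)) =
      Quot.mk orbRel (Quot.mk (replRel m A B) (((q.1.val : ℕ) : ZMod (2*m)), q.2)) := by
  rintro p q (⟨i, x, hx, rfl, rfl⟩ | ⟨i, x, hx, rfl, rfl⟩)
  · have e1 : (2*i : ZMod (2*1)).val = 0 := by
      rw [show (2*i : ZMod (2*1)) = 0 by rw [h20, zero_mul]]; rfl
    have e2 : (2*i+1 : ZMod (2*1)).val = 1 := by
      rw [show (2*i+1 : ZMod (2*1)) = 1 by rw [h20, zero_mul, zero_add]]; rfl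
    simp only [e1, e2, Nat.cast_zero, Nat.cast_one]
    refine congrArg _ (Quot.sound (Or.inl ⟨0, x, hx, ?_, ?_⟩)) <;> norm_num
  · have e1 : (2*i-1 : ZMod (2*1)).val = 1 := by
      rw [show (2*i-1 : ZMod (2*1)) = 1 by rw [h20, zero_mul]; decide]; rfl
    have e2 : (2*i : ZMod (2*1)).val = 0 := by
      rw [show (2*i : ZMod (2*1)) = 0 by rw [h20, zero_mul]]; rfl
    simp only [e1, e2, Nat.cast_zero, Nat.cast_one]
    have step1 : Quot.mk (replRel m A B) ((1 : ZMod (2*m)), x) =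
        Quot.mk (replRel m A B) ((2 : ZMod (2*m)), x) :=
      Quot.sound (Or.inr ⟨1, x, hx, by norm_num, by norm_num⟩)
    rw [step1]
    have h := orbit_mk (A := A) (B := B) (0 : ZMod (2*m)) x 1
    simp only [Nat.cast_one, zero_add, mul_one] at h
    exact h

/-- Inverse map of the quotient homeomorphism. -/
private def Fi : Repl 1 P A B → Quot (orbRel (P := P) (A := A) (B := B) (m := m)) :=
  Quot.lift (fun p => Quot.mk _ (Quot.mk (replRel m A B)
    (((p.1.val : ℕ) : ZMod (2*m)), p.2))) resp3

private lemma Ft_Fi (hm : 1 ≤ m) : ∀ w, Ft (Fi (A := A) (B := B) (m := m) w) = w := by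
  haveI : NeZero (2*1) := ⟨by norm_num⟩
  haveI : NeZero (2*m) := ⟨by omega⟩
  intro w
  induction w using Quot.ind with | mk p => ?_
  obtain ⟨j, x⟩ := p
  show Quot.mk (replRel 1 A B) (c2 m ((j.val : ℕ) : ZMod (2*m)), x) = _
  rw [show c2 m ((j.val : ℕ) : ZMod (2*m)) = ((j.val : ℕ) : ZMod (2*1)) from
    map_natCast (c2 m) j.val, ZMod.natCast_rightInverse j]

private lemma Fi_Ft (hm : 1 ≤ m) : ∀ z, Fi (Ft (A := A) (B := B) (m := m) z) = z := by
  haveI : NeZero (2*1) := ⟨by norm_num⟩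
  haveI : NeZero (2*m) := ⟨by omega⟩
  intro z
  induction z using Quot.ind with | mk w => ?_
  induction w using Quot.ind with | mk p => ?_
  obtain ⟨k, x⟩ := p
  show Quot.mk orbRel (Quot.mk (replRel m A B) ((((c2 m k).val : ℕ) : ZMod (2*m)), x)) = _
  have hval : (c2 m k).val = k.val % (2*1) := by
    rw [c2, ZMod.castHom_apply, ← ZMod.natCast_val, ZMod.val_natCast]
  rw [hval]
  have hk : ((k.val % (2*1) : ℕ) : ZMod (2*m)) + 2*((k.val / (2*1) : ℕ) : ZMod (2*m)) = k := by
    have h1 : (k.val % (2*1)) + 2 * (k.val / (2*1)) = k.val := by omega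
    have h2 := congrArg (fun t : ℕ => (t : ZMod (2*m))) h1
    push_cast at h2
    rw [h2, ZMod.natCast_rightInverse k]
  calc Quot.mk orbRel (Quot.mk (replRel m A B) (((k.val % (2*1) : ℕ) : ZMod (2*m)), x))
      = Quot.mk orbRel (Quot.mk (replRel m A B)
          (((k.val % (2*1) : ℕ) : ZMod (2*m)) + 2*((k.val / (2*1) : ℕ) : ZMod (2*m)), x)) :=
        (orbit_mk _ x (k.val / (2*1))).symm
    _ = _ := by rw [hk]

private lemma continuous_Ft : Continuous (Ft (P := P) (A := A) (B := B) (m := m)) := by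
  apply continuous_quot_lift
  apply continuous_quot_lift
  exact continuous_quot_mk.comp
    (((continuous_of_discreteTopology (f := ⇑(c2 m))).comp continuous_fst).prodMk
      continuous_snd)

private lemma continuous_Fi : Continuous (Fi (P := P) (A := A) (B := B) (m := m)) := by
  apply continuous_quot_lift
  exact continuous_quot_mk.comp (continuous_quot_mk.comp
    (((continuous_of_discreteTopology
        (f := fun j : ZMod (2*1) => ((j.val : ℕ) : ZMod (2*m)))).comp
      continuous_fst).prodMk continuous_snd))

end Aux

/-- The map `(k, x) ↦ (k + 2, x)` descends to a homeomorphism `ρ` of the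
`2m`-replicant with `ρ^m = id`, and the quotient by the iterates of `ρ` is
homeomorphic to the double `D²(P; A, B)` via the reduction
`ZMod (2m) → ZMod 2` on indices. -/
theorem repl_cyclic_quotient (P : Type*) [TopologicalSpace P] (A B : Set P)
    (m : ℕ) (hm : 1 ≤ m) :
    ∃ ρ : Repl m P A B ≃ₜ Repl m P A B,
      (∀ (k : ZMod (2*m)) (x : P),
        ρ (Quot.mk (replRel m A B) (k, x)) = Quot.mk (replRel m A B) (k + 2, x)) ∧
      (∀ z : Repl m P A B, (⇑ρ)^[m] z = z) ∧
      ∃ φ : Quot (fun p q : Repl m P A B => ∃ j : ℕ, q = (⇑ρ)^[j] p) ≃ₜ Repl 1 P A B,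
        ∀ (k : ZMod (2*m)) (x : P),
          φ (Quot.mk _ (Quot.mk (replRel m A B) (k, x))) =
            Quot.mk (replRel 1 A B)
              (ZMod.castHom (⟨m, by ring⟩ : (2*1) ∣ (2*m)) (ZMod (2*1)) k, x) := by
  haveI : NeZero (2*m) := ⟨by omega⟩
  refine ⟨rho, fun k x => rho_mk k x, ?_, ?_⟩
  · intro z
    induction z using Quot.ind with | mk p => ?_
    obtain ⟨k, x⟩ := p
    rw [rho_iter]
    refine mk_congr x ?_
    have h : ((2*m : ℕ) : ZMod (2*m)) = 0 := ZMod.natCast_self (2*m)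
    push_cast at h
    linear_combination h
  · exact ⟨⟨⟨Ft, Fi, Fi_Ft hm, Ft_Fi hm⟩, continuous_Ft, continuous_Fi⟩,
      fun k x => rfl⟩
end

section
/- Let Γ be a simple graph on a vertex type V, and let a group G act on V by automorphisms of Γ. Assume that the action is free apart from the identity (if g • v = v for some vertex v then g = 1), and that for every pair of adjacent vertices u, w there exists g ∈ G with g • u = w and g • w = u. Suppose x, y, z are vertices with x adjacent to y, y adjacent to z, and x ≠ z. Then there is no g ∈ G with g • {x, y} = {y, z} as unordered pairs. In particular, distinct edges of Γ sharing a common vertex lie in distinct G-orbits of edges. -/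
/-- In a reflection graph (the group acts on the vertices by graph automorphisms,
only the identity fixes a vertex, and each pair of adjacent vertices is swapped
by some group element), no group element carries an edge `{x, y}` to an adjacent
edge `{y, z}` with `x ≠ z`: distinct edges sharing a vertex lie in distinct
orbits. -/
theorem no_group_element_identifies_adjacent_edges
    (V : Type*) (G : Type*) [Group G] [MulAction G V] (Γ : SimpleGraph V)
    (hact : ∀ (g : G) (u w : V), Γ.Adj u w → Γ.Adj (g • u) (g • w))
    (hfree : ∀ (g : G) (v : V), g • v = v → g = 1)
    (hswap : ∀ u w : V, Γ.Adj u w → ∃ g : G, g • u = w ∧ g • w = u)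
    (x y z : V) (hxy : Γ.Adj x y) (hyz : Γ.Adj y z) (hxz : x ≠ z) :
    ¬ ∃ g : G, s(g • x, g • y) = s(y, z) := by
  rintro ⟨g, hg⟩
  rw [Sym2.eq_iff] at hg
  rcases hg with ⟨h1, h2⟩ | ⟨h1, h2⟩
  · obtain ⟨h, hx, hy⟩ := hswap x y hxy
    have : (g * h) • y = y := by rw [mul_smul, hy, h1]
    have hgh := hfree _ _ this
    have hg1 : g = h⁻¹ := by
      have := congrArg (· * h⁻¹) hgh
      simpa using this
    have : g • y = x := by
      rw [hg1, inv_smul_eq_iff]; exact hx.symm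
    exact hxz (this.symm.trans h2)
  · have := hfree g y h2
    subst this
    simp at h1
    exact hxz h1
end

section
/- Let Γ be a simple graph on a vertex type V, and let a group G act on V by automorphisms of Γ. Assume that the action is free apart from the identity (if g • v = v for some vertex v then g = 1), that for every pair of adjacent vertices u, w there exists g ∈ G with g • u = w and g • w = u, and that Γ is connected. Then for every vertex v, the map sending an edge of Γ incident to v to its G-orbit is a bijection from the set of edges of Γ incident to v onto the set of all G-orbits of edges of Γ. Consequently, if every vertex of Γ has exactly r incident edges, then the number of G-orbits of edges of Γ equals r. -/
/-- In a connected reflection graph (the group acts on the vertices by graph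
automorphisms, only the identity fixes a vertex, and each pair of adjacent
vertices is swapped by some group element), for every vertex `v` the map sending
an edge incident to `v` to its orbit is a bijection from the edges at `v` onto
the set of all orbits of edges. Consequently, if every vertex has exactly `r`
incident edges, there are exactly `r` orbits of edges. -/
theorem reflection_graph_edge_orbits
    (V : Type*) (G : Type*) [Group G] [MulAction G V] (Γ : SimpleGraph V)
    (hact : ∀ (g : G) (u w : V), Γ.Adj u w → Γ.Adj (g • u) (g • w))
    (hfree : ∀ (g : G) (v : V), g • v = v → g = 1)
    (hswap : ∀ u w : V, Γ.Adj u w → ∃ g : G, g • u = w ∧ g • w = u)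
    (hconn : Γ.Connected) :
    (∀ v : V, Function.Bijective
      (fun e : {e : Sym2 V // e ∈ Γ.edgeSet ∧ v ∈ e} =>
        Quot.mk (fun e₁ e₂ : Γ.edgeSet => ∃ g : G, Sym2.map (fun u => g • u) e₁.1 = e₂.1)
          ⟨e.1, e.2.1⟩)) ∧
    (∀ r : ℕ, (∀ u : V, Nat.card {e : Sym2 V // e ∈ Γ.edgeSet ∧ u ∈ e} = r) →
      Nat.card
        (Quot (fun e₁ e₂ : Γ.edgeSet => ∃ g : G, Sym2.map (fun u => g • u) e₁.1 = e₂.1)) = r) := by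
  classical
  -- basic computation lemmas for the action on `Sym2 V`
  have hone : ∀ e : Sym2 V, Sym2.map (fun x => (1 : G) • x) e = e := by
    intro e; induction e using Sym2.ind with
    | _ a b => simp
  have hcomp : ∀ (g h : G) (e : Sym2 V),
      Sym2.map (fun x => g • x) (Sym2.map (fun x => h • x) e)
        = Sym2.map (fun x => (g * h) • x) e := by
    intro g h e; induction e using Sym2.ind with
    | _ a b => simp [mul_smul]
  have hequiv : Equivalence
      (fun e₁ e₂ : Γ.edgeSet => ∃ g : G, Sym2.map (fun u => g • u) e₁.1 = e₂.1) := by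
    constructor
    · intro e; exact ⟨1, hone e.1⟩
    · rintro e₁ e₂ ⟨g, hg⟩
      refine ⟨g⁻¹, ?_⟩
      rw [← hg, hcomp, inv_mul_cancel, hone]
    · rintro e₁ e₂ e₃ ⟨g, hg⟩ ⟨h, hh⟩
      refine ⟨h * g, ?_⟩
      rw [← hh, ← hg, hcomp]
  have hedge : ∀ (g : G) (e : Sym2 V), e ∈ Γ.edgeSet →
      Sym2.map (fun u => g • u) e ∈ Γ.edgeSet := by
    intro g e he
    induction e using Sym2.ind with
    | _ a b => simpa using hact g a b (by simpa using he)
  have key : ∀ v : V, Function.Bijective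
      (fun e : {e : Sym2 V // e ∈ Γ.edgeSet ∧ v ∈ e} =>
        Quot.mk (fun e₁ e₂ : Γ.edgeSet => ∃ g : G, Sym2.map (fun u => g • u) e₁.1 = e₂.1)
          ⟨e.1, e.2.1⟩) := by
    intro v
    constructor
    · -- injectivity
      rintro ⟨e₁, he₁, hv₁⟩ ⟨e₂, he₂, hv₂⟩ h
      obtain ⟨g, hg⟩ := hequiv.eqvGen_iff.mp (Quot.eqvGen_exact h)
      simp only at hg
      obtain ⟨w₁, rfl⟩ := Sym2.mem_iff_exists.mp hv₁
      obtain ⟨w₂, rfl⟩ := Sym2.mem_iff_exists.mp hv₂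
      rw [Sym2.map_pair_eq, Sym2.eq_iff] at hg
      rcases hg with ⟨h1, h2⟩ | ⟨h1, h2⟩
      · have : g = 1 := hfree g v h1
        subst this
        rw [one_smul] at h2
        subst h2
        rfl
      · have hadj : Γ.Adj v w₂ := by simpa using he₂
        obtain ⟨k, hk1, hk2⟩ := hswap v w₂ hadj
        have hkg : k = g := by
          have : (k⁻¹ * g) • v = v := by
            rw [mul_smul, h1, ← hk1, inv_smul_smul]
          have := hfree _ _ this
          exact inv_mul_eq_one.mp this
        subst hkg
        have : w₁ = w₂ := by
          apply smul_left_cancel k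
          rw [h2, hk2]
        subst this
        rfl
    · -- surjectivity
      -- P u : every edge at u is equivalent to an edge at v
      have stepP : ∀ a b : V, Γ.Adj a b →
          (∀ e : Sym2 V, e ∈ Γ.edgeSet → a ∈ e →
            ∃ e' : Sym2 V, e' ∈ Γ.edgeSet ∧ v ∈ e' ∧
              ∃ g : G, Sym2.map (fun x => g • x) e' = e) →
          (∀ e : Sym2 V, e ∈ Γ.edgeSet → b ∈ e →
            ∃ e' : Sym2 V, e' ∈ Γ.edgeSet ∧ v ∈ e' ∧
              ∃ g : G, Sym2.map (fun x => g • x) e' = e) := by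
        intro a b hab hPa e he hb
        obtain ⟨g, hg1, hg2⟩ := hswap b a hab.symm
        have he' := hedge g e he
        have hb' : a ∈ Sym2.map (fun u => g • u) e :=
          Sym2.mem_map.mpr ⟨b, hb, hg1⟩
        obtain ⟨e', he'', hv', g', hg'⟩ := hPa _ he' hb'
        refine ⟨e', he'', hv', g⁻¹ * g', ?_⟩
        rw [← hcomp, hg', hcomp, inv_mul_cancel, hone]
      have walkP : ∀ (a b : V), Γ.Walk a b →
          (∀ e : Sym2 V, e ∈ Γ.edgeSet → a ∈ e →
            ∃ e' : Sym2 V, e' ∈ Γ.edgeSet ∧ v ∈ e' ∧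
              ∃ g : G, Sym2.map (fun x => g • x) e' = e) →
          (∀ e : Sym2 V, e ∈ Γ.edgeSet → b ∈ e →
            ∃ e' : Sym2 V, e' ∈ Γ.edgeSet ∧ v ∈ e' ∧
              ∃ g : G, Sym2.map (fun x => g • x) e' = e) := by
        intro a b w
        induction w with
        | nil => exact id
        | cons h p ih => exact fun ha => ih (stepP _ _ h ha)
      have Pall : ∀ u : V, ∀ e : Sym2 V, e ∈ Γ.edgeSet → u ∈ e →
          ∃ e' : Sym2 V, e' ∈ Γ.edgeSet ∧ v ∈ e' ∧
            ∃ g : G, Sym2.map (fun x => g • x) e' = e := by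
        intro u
        obtain ⟨p⟩ := hconn v u
        exact walkP v u p (fun e he hv => ⟨e, he, hv, 1, hone e⟩)
      intro q
      induction q using Quot.ind with
      | _ e =>
        obtain ⟨e, he⟩ := e
        induction e using Sym2.ind with
        | _ a b =>
          obtain ⟨e', he', hv', g, hg⟩ :=
            Pall a s(a, b) he (Sym2.mem_mk_left a b)
          refine ⟨⟨e', he', hv'⟩, ?_⟩
          exact Quot.sound ⟨g, hg⟩
  refine ⟨key, ?_⟩
  intro r hr
  obtain ⟨v⟩ := hconn.nonempty
  rw [← hr v]
  exact (Nat.card_eq_of_bijective _ (key v)).symm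
end

section
/- Let n ≥ 1 be an integer, let v and e be natural numbers, and let f : ℕ → ℕ be finitely supported with f(0) = 0. Suppose that, as integers, v − e + Σ_k f(k) = 2, that e = (n+1)·v, and that e = Σ_k k·f(k). Then f(1) ≥ 2(n+1). -/
/-- Euler-characteristic count of bigons: if a connected graph on the sphere with
disk faces has `v` vertices, `e` edges, every vertex of valence `2(n+1)`, and
`f k` faces with `2k` edges (no face has fewer than 2 boundary edges, i.e.
`f 0 = 0`), then there are at least `2(n+1)` bigon faces. -/
theorem bigon_count (n : ℕ) (hn : 1 ≤ n) (v e : ℕ) (f : ℕ →₀ ℕ) (h0 : f 0 = 0)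
    (heuler : (v : ℤ) - (e : ℤ) + ∑ k ∈ f.support, (f k : ℤ) = 2)
    (hval : e = (n + 1) * v)
    (hedge : (e : ℤ) = ∑ k ∈ f.support, (k : ℤ) * (f k : ℤ)) :
    2 * (n + 1) ≤ f 1 := by
  set S := f.support with hS
  -- each k in the support is ≥ 1
  have hk1 : ∀ k ∈ S, (1 : ℤ) ≤ (k : ℤ) := by
    intro k hk
    have : f k ≠ 0 := Finsupp.mem_support_iff.mp hk
    have hk0 : k ≠ 0 := by rintro rfl; exact this h0
    exact_mod_cast Nat.one_le_iff_ne_zero.mpr hk0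
  have hdiff : ∑ k ∈ S, ((k : ℤ) - 1) * (f k : ℤ) = (v : ℤ) - 2 := by
    have : ∑ k ∈ S, ((k : ℤ) - 1) * (f k : ℤ)
        = (∑ k ∈ S, (k : ℤ) * (f k : ℤ)) - ∑ k ∈ S, (f k : ℤ) := by
      rw [← Finset.sum_sub_distrib]
      congr 1; ext k; ring
    rw [this, ← hedge]
    linarith
  have hnn : 0 ≤ ∑ k ∈ S, ((k : ℤ) - 1) * (f k : ℤ) := by
    apply Finset.sum_nonneg
    intro k hk
    have h := hk1 k hk
    have : (0:ℤ) ≤ (f k : ℤ) := Int.ofNat_nonneg _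
    nlinarith
  have hv2 : (2 : ℤ) ≤ (v : ℤ) := by linarith [hdiff ▸ hnn]
  -- bound: Σ f k - f 1 ≤ Σ (k-1) f k
  have hbound : (∑ k ∈ S, (f k : ℤ)) - (f 1 : ℤ) ≤ ∑ k ∈ S, ((k : ℤ) - 1) * (f k : ℤ) := by
    have h1 : ∑ k ∈ S, (if k = 1 then (f 1 : ℤ) else 0) ≤ (f 1 : ℤ) := by
      rw [Finset.sum_ite_eq' S 1 (fun _ => (f 1 : ℤ))]
      split <;> simp
    have h2 : ∑ k ∈ S, ((f k : ℤ) - (if k = 1 then (f 1 : ℤ) else 0))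
        ≤ ∑ k ∈ S, ((k : ℤ) - 1) * (f k : ℤ) := by
      apply Finset.sum_le_sum
      intro k hk
      by_cases hk1' : k = 1
      · subst hk1'; simp
      · have hk2 : (2 : ℤ) ≤ (k : ℤ) := by
          have hne0 : f k ≠ 0 := Finsupp.mem_support_iff.mp hk
          have hk0 : k ≠ 0 := by rintro rfl; exact hne0 h0
          have : 2 ≤ k := by omega
          exact_mod_cast this
        simp only [hk1', if_false, sub_zero]
        nlinarith [Int.ofNat_nonneg (f k)]
    rw [Finset.sum_sub_distrib] at h2
    linarith
  have hF : ∑ k ∈ S, (f k : ℤ) = 2 - (v : ℤ) + (e : ℤ) := by linarith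
  have key : (4 : ℤ) + (e : ℤ) - 2 * (v : ℤ) ≤ (f 1 : ℤ) := by
    rw [hdiff, hF] at hbound; linarith
  have he : (e : ℤ) = ((n : ℤ) + 1) * (v : ℤ) := by exact_mod_cast hval
  have hn' : (1 : ℤ) ≤ (n : ℤ) := by exact_mod_cast hn
  have : (2 : ℤ) * ((n : ℤ) + 1) ≤ (f 1 : ℤ) := by nlinarith
  exact_mod_cast this
end
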